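/- Fix β > 0, Δ ∈ ℝ, p ∈ [0,1], and (x_1,x_2) with 0 < |x_1| < x_2 < 1. Define W(y_1,y_2) = x_1y_1 + x_2y_2 − p log(1 + 2 e^{y_2+βΔ} cosh y_1) − (1−p) log(1 + 2 e^{y_2−βΔ} cosh y_1) + p log(1+2e^{βΔ}) + (1−p) log(1+2e^{−βΔ}). If (y_1*, y_2*) is a critical point of W (both partial derivatives vanish), then tanh(y_1*) = x_1/x_2, and the quantity z = 2 e^{y_2*} cosh(y_1*) satisfies x_2/z = p e^{βΔ}/(1 + z e^{βΔ}) + (1−p) e^{−βΔ}/(1 + z e^{−βΔ}). -/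

import Mathlib

/-!
Write `g u = p log (1 + u e^{βΔ}) + (1 - p) log (1 + u e^{-βΔ})` and `z y = 2 e^{y₂} cosh y₁`.
Then `W y = x₁ y₁ + x₂ y₂ - g (z y) + g 2`, so by the chain rule a critical point satisfies
`x₁ = g'(z) ∂₁z = g'(z) z tanh y₁` and `x₂ = g'(z) ∂₂z = g'(z) z`.
The second equation is `x₂ / z = g'(z)`, and dividing the first by it gives `tanh y₁ = x₁ / x₂`.
-/

noncomputable section

/-- The function `W` for the Blume-Capel model with bimodal random crystal field. -/
def Wdis (β Δ p x₁ x₂ : ℝ) (y : ℝ × ℝ) : ℝ :=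
  x₁ * y.1 + x₂ * y.2 -
    p * Real.log (1 + 2 * Real.exp (y.2 + β * Δ) * Real.cosh y.1) -
    (1 - p) * Real.log (1 + 2 * Real.exp (y.2 - β * Δ) * Real.cosh y.1) +
    p * Real.log (1 + 2 * Real.exp (β * Δ)) +
    (1 - p) * Real.log (1 + 2 * Real.exp (-(β * Δ)))

open Real

def bimodalLog (a p u : ℝ) : ℝ :=
  p * log (1 + u * exp a) + (1 - p) * log (1 + u * exp (-a))

lemma hasDerivAt_log_one_add_mul {c u : ℝ} (hu : 1 + u * c ≠ 0) :
    HasDerivAt (fun u => log (1 + u * c)) (c / (1 + u * c)) u := by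
  simpa using (((hasDerivAt_id u).mul_const c).const_add 1).log hu

lemma hasDerivAt_bimodalLog (a p : ℝ) {u : ℝ} (hu : 0 ≤ u) :
    HasDerivAt (bimodalLog a p)
      (p * exp a / (1 + u * exp a) + (1 - p) * exp (-a) / (1 + u * exp (-a))) u := by
  have hpos := hasDerivAt_log_one_add_mul (c := exp a) (u := u) (by positivity)
  have hneg := hasDerivAt_log_one_add_mul (c := exp (-a)) (u := u) (by positivity)
  simp only [mul_div_assoc]
  exact (hpos.const_mul p).add (hneg.const_mul (1 - p))

lemma Wdis_eq (β Δ p x₁ x₂ : ℝ) :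
    Wdis β Δ p x₁ x₂ = fun y => x₁ * y.1 + x₂ * y.2 -
      bimodalLog (β * Δ) p (2 * exp y.2 * cosh y.1) + bimodalLog (β * Δ) p 2 := by
  ext y
  simp only [Wdis, bimodalLog, exp_add, exp_sub, exp_neg]
  ring_nf

lemma Wdis_partials_of_fderiv_eq_zero {β Δ p x₁ x₂ y₁ y₂ : ℝ}
    (h : fderiv ℝ (Wdis β Δ p x₁ x₂) (y₁, y₂) = 0) :
    x₁ = deriv (bimodalLog (β * Δ) p) (2 * exp y₂ * cosh y₁) * (2 * exp y₂ * sinh y₁) ∧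
      x₂ = deriv (bimodalLog (β * Δ) p) (2 * exp y₂ * cosh y₁) * (2 * exp y₂ * cosh y₁) := by
  have hg := hasDerivAt_bimodalLog (β * Δ) p (u := 2 * exp y₂ * cosh y₁) (by positivity)
  have hz := (((hasFDerivAt_snd (p := (y₁, y₂))).exp).const_mul 2).mul
    (hasFDerivAt_fst (p := (y₁, y₂))).cosh
  have hW := (((hasFDerivAt_fst.const_mul x₁).add (hasFDerivAt_snd.const_mul x₂)).sub
    (hg.comp_hasFDerivAt (f := fun y : ℝ × ℝ => 2 * exp y.2 * cosh y.1) _ hz)).add_const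
    (bimodalLog (β * Δ) p 2)
  rw [Wdis_eq] at h
  replace h := hW.fderiv.symm.trans h
  have h₁ := congrArg (· (1, 0)) h
  have h₂ := congrArg (· (0, 1)) h
  simp only [smul_add, sub_apply, add_apply, smul_apply, ContinuousLinearMap.coe_fst', smul_eq_mul,
    mul_one, ContinuousLinearMap.coe_snd', mul_zero, add_zero, zero_apply, zero_add] at h₁ h₂
  rw [hg.deriv]
  constructor <;> linarith

theorem critical_point_W_dis_general (β Δ p x₁ x₂ : ℝ)
    (hxx : |x₁| < x₂) (y₁s y₂s : ℝ)
    (hcrit : fderiv ℝ (Wdis β Δ p x₁ x₂) (y₁s, y₂s) = 0) :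
    Real.tanh y₁s = x₁ / x₂ ∧
    ∀ z : ℝ, z = 2 * Real.exp y₂s * Real.cosh y₁s →
      x₂ / z = p * Real.exp (β * Δ) / (1 + z * Real.exp (β * Δ)) +
        (1 - p) * Real.exp (-(β * Δ)) / (1 + z * Real.exp (-(β * Δ))) := by
  obtain ⟨h₁, h₂⟩ := Wdis_partials_of_fderiv_eq_zero hcrit
  have hx₂ : 0 < x₂ := (abs_nonneg x₁).trans_lt hxx
  constructor
  · rw [tanh_eq_sinh_div_cosh, div_eq_div_iff (cosh_pos y₁s).ne' hx₂.ne']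
    linear_combination sinh y₁s * h₂ - cosh y₁s * h₁
  · rintro z rfl
    rw [h₂, mul_div_cancel_right₀ _ (by positivity),
      (hasDerivAt_bimodalLog (β * Δ) p (by positivity)).deriv]

/-- At any critical point `(y₁*, y₂*)` of `W` one has `tanh y₁* = x₁/x₂`, and
`z = 2 e^{y₂*} cosh y₁*` satisfies
`x₂/z = p e^{βΔ}/(1+z e^{βΔ}) + (1−p) e^{−βΔ}/(1+z e^{−βΔ})`. -/
theorem critical_point_W_dis (β Δ p x₁ x₂ : ℝ) (hβ : 0 < β) (hp0 : 0 ≤ p) (hp1 : p ≤ 1)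
    (hx : 0 < |x₁|) (hxx : |x₁| < x₂) (hx1 : x₂ < 1) (y₁s y₂s : ℝ)
    (hcrit : fderiv ℝ (Wdis β Δ p x₁ x₂) (y₁s, y₂s) = 0) :
    Real.tanh y₁s = x₁ / x₂ ∧
    ∀ z : ℝ, z = 2 * Real.exp y₂s * Real.cosh y₁s →
      x₂ / z = p * Real.exp (β * Δ) / (1 + z * Real.exp (β * Δ)) +
        (1 - p) * Real.exp (-(β * Δ)) / (1 + z * Real.exp (-(β * Δ))) :=
  critical_point_W_dis_general β Δ p x₁ x₂ hxx y₁s y₂s hcrit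

end
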